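/- arXiv:2207.14252 — 2 statements merged into one kernel-verified Lean document; each statement's English description precedes it below -/
import Mathlib

section
/- Let the excited closed-loop system be x_{k+1} = (A + BK) x_k + B e_k + ω_k with e_k ~ N(0, Σ_e) and ω_k ~ N(0, Σ) independent, and input u_k = K x_k + e_k. Then for any k and window length τ, the expected quadratic cost E[Σ_{j=k}^{k+τ-1} (x_jᵀ Q x_j + u_jᵀ R u_j)] equals the expected cost of the unexcited system x̃_{j+1} = (A+BK) x̃_j + ω̃_j with noise covariance Σ + B Σ_e Bᵀ and input ũ_j = K x̃_j (same initial distribution), plus τ · tr(Σ_e R). -/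
/-!
Everything is determined by second moments. A quadratic cost has expectation
`E[yᵀ R y] = tr(R E[y yᵀ])`, and if `y = M z + ν` with `E[z νᵀ] = 0` and `E[ν νᵀ] = N`, then
`E[y yᵀ] = M E[z zᵀ] Mᵀ + N`. The excited and the unexcited states are driven by the same
recursion `P ↦ (A + BK) P (A + BK)ᵀ + Σ + B Σe Bᵀ` from the same initial moment, so their second
moments agree over the whole window, while the inputs differ by `E[u uᵀ] - E[ũ ũᵀ] = Σe`, which adds
`tr(R Σe) = tr(Σe R)` to each stage cost.
-/

open MeasureTheory Matrix Finset

namespace Matrix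

variable {Ω ι κ : Type*} [MeasurableSpace Ω] {μ : Measure Ω}

noncomputable def crossMoment (μ : Measure Ω) (x : Ω → ι → ℝ) (y : Ω → κ → ℝ) : Matrix ι κ ℝ :=
  of fun i l => ∫ ω, x ω i * y ω l ∂μ

section Affine

variable [Fintype κ]

theorem mulVec_add_apply_mul_mulVec_add_apply (M : Matrix ι κ ℝ) (z : κ → ℝ) (ν : ι → ℝ)
    (i l : ι) :
    (M *ᵥ z + ν) i * (M *ᵥ z + ν) l
      = ∑ b, (∑ a, M i a * (z a * z b)) * M l b + ∑ a, M i a * (z a * ν l)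
        + ∑ a, M l a * (z a * ν i) + ν i * ν l := by
  have hentry : ∀ j, (M *ᵥ z + ν) j = ∑ a, M j a * z a + ν j := fun _ => rfl
  have hzz : (∑ a, M i a * z a) * ∑ b, M l b * z b
      = ∑ b, (∑ a, M i a * (z a * z b)) * M l b := by
    simp only [sum_mul, mul_sum]
    exact sum_congr rfl fun b _ => sum_congr rfl fun a _ => by ring
  have hzν : ∀ j j', (∑ a, M j a * z a) * ν j' = ∑ a, M j a * (z a * ν j') := fun j j' => by
    simp only [sum_mul, mul_assoc]
  rw [hentry, hentry, ← hzz, ← hzν, ← hzν]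
  ring

variable {x : Ω → κ → ℝ} {ν y : Ω → ι → ℝ}

theorem integrable_mul_of_eq_mulVec_add (M : Matrix ι κ ℝ) (hy : ∀ ω, y ω = M *ᵥ x ω + ν ω)
    (hxx : ∀ a b, Integrable (fun ω => x ω a * x ω b) μ)
    (hxν : ∀ a i, Integrable (fun ω => x ω a * ν ω i) μ)
    (hνν : ∀ i l, Integrable (fun ω => ν ω i * ν ω l) μ) (i l : ι) :
    Integrable (fun ω => y ω i * y ω l) μ := by
  have hzz : Integrable (fun ω => ∑ b, (∑ a, M i a * (x ω a * x ω b)) * M l b) μ :=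
    integrable_finsetSum _ fun b _ => (integrable_finsetSum _ fun a _ =>
      (hxx a b).const_mul _).mul_const _
  have hzν : ∀ j j', Integrable (fun ω => ∑ a, M j a * (x ω a * ν ω j')) μ := fun j j' =>
    integrable_finsetSum _ fun a _ => (hxν a j').const_mul _
  simp only [hy, mulVec_add_apply_mul_mulVec_add_apply]
  exact ((hzz.fun_add (hzν i l)).fun_add (hzν l i)).fun_add (hνν i l)

theorem crossMoment_of_eq_mulVec_add (M : Matrix ι κ ℝ) {N : Matrix ι ι ℝ}
    (hy : ∀ ω, y ω = M *ᵥ x ω + ν ω)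
    (hcross : ∀ a i, ∫ ω, x ω a * ν ω i ∂μ = 0) (hcov : ∀ i l, ∫ ω, ν ω i * ν ω l ∂μ = N i l)
    (hxx : ∀ a b, Integrable (fun ω => x ω a * x ω b) μ)
    (hxν : ∀ a i, Integrable (fun ω => x ω a * ν ω i) μ)
    (hνν : ∀ i l, Integrable (fun ω => ν ω i * ν ω l) μ) :
    crossMoment μ y y = M * crossMoment μ x x * Mᵀ + N := by
  ext i l
  have hzz : Integrable (fun ω => ∑ b, (∑ a, M i a * (x ω a * x ω b)) * M l b) μ :=
    integrable_finsetSum _ fun b _ => (integrable_finsetSum _ fun a _ =>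
      (hxx a b).const_mul _).mul_const _
  have hzν : ∀ j j', Integrable (fun ω => ∑ a, M j a * (x ω a * ν ω j')) μ := fun j j' =>
    integrable_finsetSum _ fun a _ => (hxν a j').const_mul _
  have hexpand : (fun ω => y ω i * y ω l) = fun ω => ∑ b, (∑ a, M i a * (x ω a * x ω b)) * M l b
      + ∑ a, M i a * (x ω a * ν ω l) + ∑ a, M l a * (x ω a * ν ω i) + ν ω i * ν ω l :=
    funext fun ω => by rw [hy]; exact mulVec_add_apply_mul_mulVec_add_apply M (x ω) (ν ω) i l
  change ∫ ω, y ω i * y ω l ∂μ = _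
  rw [hexpand, integral_add ((hzz.fun_add (hzν i l)).fun_add (hzν l i)) (hνν i l),
    integral_add (hzz.fun_add (hzν i l)) (hzν l i), integral_add hzz (hzν i l),
    integral_finsetSum _ fun b _ => (integrable_finsetSum _ fun a _ =>
      (hxx a b).const_mul _).mul_const _,
    integral_finsetSum _ fun a _ => (hxν a l).const_mul _,
    integral_finsetSum _ fun a _ => (hxν a i).const_mul _]
  simp only [integral_mul_const, integral_const_mul, hcross, hcov, mul_zero, sum_const_zero,
    add_zero, add_apply, mul_apply, transpose_apply, crossMoment, of_apply]
  refine congrArg (· + N i l) (sum_congr rfl fun b _ => ?_)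
  rw [integral_finsetSum _ fun a _ => (hxx a b).const_mul _]
  simp only [integral_const_mul]

theorem integrable_mul_of_eq_mulVec (M : Matrix ι κ ℝ) (hy : ∀ ω, y ω = M *ᵥ x ω)
    (hxx : ∀ a b, Integrable (fun ω => x ω a * x ω b) μ) (i l : ι) :
    Integrable (fun ω => y ω i * y ω l) μ :=
  integrable_mul_of_eq_mulVec_add M (ν := 0) (by simpa using hy) hxx (by simp) (by simp) i l

theorem crossMoment_of_eq_mulVec (M : Matrix ι κ ℝ) (hy : ∀ ω, y ω = M *ᵥ x ω)
    (hxx : ∀ a b, Integrable (fun ω => x ω a * x ω b) μ) :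
    crossMoment μ y y = M * crossMoment μ x x * Mᵀ := by
  simpa using crossMoment_of_eq_mulVec_add M (ν := 0) (N := 0) (by simpa using hy) (by simp)
    (by simp) hxx (by simp) (by simp)

end Affine

section Quadratic

variable [Fintype ι]

theorem dotProduct_mulVec_self_eq_sum (R : Matrix ι ι ℝ) (v : ι → ℝ) :
    v ⬝ᵥ (R *ᵥ v) = ∑ i, ∑ l, R i l * (v l * v i) := by
  simp only [dotProduct, mulVec, mul_sum]
  exact sum_congr rfl fun i _ => sum_congr rfl fun l _ => by ring

variable {y : Ω → ι → ℝ}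

theorem integrable_dotProduct_mulVec_self (R : Matrix ι ι ℝ)
    (hy : ∀ i l, Integrable (fun ω => y ω i * y ω l) μ) :
    Integrable (fun ω => y ω ⬝ᵥ (R *ᵥ y ω)) μ := by
  simp only [dotProduct_mulVec_self_eq_sum]
  exact integrable_finsetSum _ fun i _ => integrable_finsetSum _ fun l _ =>
    (hy l i).const_mul _

theorem integral_dotProduct_mulVec_self (R : Matrix ι ι ℝ)
    (hy : ∀ i l, Integrable (fun ω => y ω i * y ω l) μ) :
    ∫ ω, y ω ⬝ᵥ (R *ᵥ y ω) ∂μ = trace (R * crossMoment μ y y) := by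
  simp only [dotProduct_mulVec_self_eq_sum]
  rw [integral_finsetSum _ fun i _ => integrable_finsetSum _ fun l _ =>
    (hy l i).const_mul (R i l)]
  refine sum_congr rfl fun i _ => ?_
  rw [integral_finsetSum _ fun l _ => (hy l i).const_mul (R i l)]
  exact sum_congr rfl fun l _ => integral_const_mul _ _

theorem integral_dotProduct_mulVec_add_dotProduct_mulVec [Fintype κ] (Q : Matrix ι ι ℝ)
    (R : Matrix κ κ ℝ) {u : Ω → κ → ℝ} (hy : ∀ i l, Integrable (fun ω => y ω i * y ω l) μ)
    (hu : ∀ i l, Integrable (fun ω => u ω i * u ω l) μ) :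
    ∫ ω, (y ω ⬝ᵥ (Q *ᵥ y ω) + u ω ⬝ᵥ (R *ᵥ u ω)) ∂μ
      = trace (Q * crossMoment μ y y) + trace (R * crossMoment μ u u) := by
  rw [integral_add (integrable_dotProduct_mulVec_self Q hy) (integrable_dotProduct_mulVec_self R hu),
    integral_dotProduct_mulVec_self Q hy, integral_dotProduct_mulVec_self R hu]

end Quadratic

end Matrix

theorem excitation_cost_decomposition_general
    {Ω : Type*} [MeasurableSpace Ω] (μ : Measure Ω)
    {n m : ℕ} (A : Matrix (Fin n) (Fin n) ℝ) (B : Matrix (Fin n) (Fin m) ℝ)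
    (K : Matrix (Fin m) (Fin n) ℝ)
    (Q : Matrix (Fin n) (Fin n) ℝ) (R : Matrix (Fin m) (Fin m) ℝ)
    (S : Matrix (Fin n) (Fin n) ℝ) (Se : Matrix (Fin m) (Fin m) ℝ)
    (x xt : ℕ → Ω → Fin n → ℝ) (e : ℕ → Ω → Fin m → ℝ) (w wt : ℕ → Ω → Fin n → ℝ)
    (u : ℕ → Ω → Fin m → ℝ) (ut : ℕ → Ω → Fin m → ℝ)
    -- dynamics and inputs
    (hx : ∀ j ω, x (j + 1) ω = (A + B * K).mulVec (x j ω) + B.mulVec (e j ω) + w j ω)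
    (hu : ∀ j ω, u j ω = K.mulVec (x j ω) + e j ω)
    (hxt : ∀ j ω, xt (j + 1) ω = (A + B * K).mulVec (xt j ω) + wt j ω)
    (hut : ∀ j ω, ut j ω = K.mulVec (xt j ω))
    -- excitation noise: zero mean, covariance Σe, uncorrelated with the state
    (hecov : ∀ j i l, ∫ ω, e j ω i * e j ω l ∂μ = Se i l)
    (hxe : ∀ j i l, ∫ ω, x j ω i * e j ω l ∂μ = 0)
    -- combined driving noise: zero mean, uncorrelated with state, merged covariance
    (hcross : ∀ j i l, ∫ ω, x j ω i * (B.mulVec (e j ω) + w j ω) l ∂μ = 0)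
    (hcrosst : ∀ j i l, ∫ ω, xt j ω i * wt j ω l ∂μ = 0)
    (hnoise : ∀ j i l,
      ∫ ω, (B.mulVec (e j ω) + w j ω) i * (B.mulVec (e j ω) + w j ω) l ∂μ
        = (S + B * Se * Bᵀ) i l)
    (hnoiset : ∀ j i l, ∫ ω, wt j ω i * wt j ω l ∂μ = (S + B * Se * Bᵀ) i l)
    -- integrability of all relevant second moments
    (hint : ∀ j i l, Integrable (fun ω => x j ω i * x j ω l) μ)
    (hintt : ∀ j i l, Integrable (fun ω => xt j ω i * xt j ω l) μ)
    (hinte : ∀ j i l, Integrable (fun ω => e j ω i * e j ω l) μ)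
    (hintxe : ∀ j i l, Integrable (fun ω => x j ω i * e j ω l) μ)
    (hintc : ∀ j i l, Integrable (fun ω => x j ω i * (B.mulVec (e j ω) + w j ω) l) μ)
    (hintct : ∀ j i l, Integrable (fun ω => xt j ω i * wt j ω l) μ)
    (hintn : ∀ j i l,
      Integrable (fun ω => (B.mulVec (e j ω) + w j ω) i * (B.mulVec (e j ω) + w j ω) l) μ)
    (hintnt : ∀ j i l, Integrable (fun ω => wt j ω i * wt j ω l) μ)
    -- same initial (second-moment) distribution at the start of the window
    (k τ : ℕ)
    (hinit : ∀ i l, ∫ ω, x k ω i * x k ω l ∂μ = ∫ ω, xt k ω i * xt k ω l ∂μ) :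
    ∫ ω, ∑ j ∈ range τ,
        (dotProduct (x (k + j) ω) (Q.mulVec (x (k + j) ω))
          + dotProduct (u (k + j) ω) (R.mulVec (u (k + j) ω))) ∂μ
      = (∫ ω, ∑ j ∈ range τ,
          (dotProduct (xt (k + j) ω) (Q.mulVec (xt (k + j) ω))
            + dotProduct (ut (k + j) ω) (R.mulVec (ut (k + j) ω))) ∂μ)
        + (τ : ℝ) * (Se * R).trace := by
  set M := A + B * K
  have hstate : ∀ j, crossMoment μ (x (k + j)) (x (k + j))
      = crossMoment μ (xt (k + j)) (xt (k + j)) := by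
    intro j
    induction j with
    | zero => exact Matrix.ext hinit
    | succ j ih =>
      have hstep : ∀ ω, x (k + j + 1) ω
          = M *ᵥ x (k + j) ω + (B *ᵥ e (k + j) ω + w (k + j) ω) := fun ω => by
        rw [hx, add_assoc]
      rw [← add_assoc, crossMoment_of_eq_mulVec_add M hstep (hcross _) (hnoise _) (hint _)
          (hintc _) (hintn _),
        crossMoment_of_eq_mulVec_add M (hxt _) (hcrosst _) (hnoiset _) (hintt _) (hintct _)
          (hintnt _), ih]
  have hintu : ∀ j, ∀ i l, Integrable (fun ω => u j ω i * u j ω l) μ := fun j =>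
    integrable_mul_of_eq_mulVec_add K (hu j) (hint j) (hintxe j) (hinte j)
  have hintut : ∀ j, ∀ i l, Integrable (fun ω => ut j ω i * ut j ω l) μ := fun j =>
    integrable_mul_of_eq_mulVec K (hut j) (hintt j)
  have hstage : ∀ j, ∫ ω, (x (k + j) ω ⬝ᵥ (Q *ᵥ x (k + j) ω) + u (k + j) ω ⬝ᵥ (R *ᵥ u (k + j) ω)) ∂μ
      = ∫ ω, (xt (k + j) ω ⬝ᵥ (Q *ᵥ xt (k + j) ω) + ut (k + j) ω ⬝ᵥ (R *ᵥ ut (k + j) ω)) ∂μ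
        + trace (Se * R) := fun j => by
    rw [integral_dotProduct_mulVec_add_dotProduct_mulVec Q R (hint _) (hintu _),
      integral_dotProduct_mulVec_add_dotProduct_mulVec Q R (hintt _) (hintut _),
      crossMoment_of_eq_mulVec_add K (hu _) (hxe _) (hecov _) (hint _) (hintxe _) (hinte _),
      crossMoment_of_eq_mulVec K (hut _) (hintt _), hstate, mul_add, trace_add,
      trace_mul_comm R Se]
    ring
  rw [integral_finsetSum _ fun j _ => (integrable_dotProduct_mulVec_self Q (hint _)).fun_add
      (integrable_dotProduct_mulVec_self R (hintu _)),
    integral_finsetSum _ fun j _ => (integrable_dotProduct_mulVec_self Q (hintt _)).fun_add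
      (integrable_dotProduct_mulVec_self R (hintut _)),
    sum_congr rfl fun j _ => hstage j, sum_add_distrib, sum_const, card_range, nsmul_eq_mul]

/-- **Theorem 1 of the paper.** For the excited closed-loop system
`x_{j+1} = (A + B K) x_j + B e_j + ω_j` with input `u_j = K x_j + e_j`, where
`e_j ~ N(0, Σe)` and `ω_j ~ N(0, Σ)` are zero-mean, mutually independent and
independent of the state (expressed through moment conditions), the expected
windowed quadratic cost equals that of the unexcited system
`x̃_{j+1} = (A + B K) x̃_j + ω̃_j` with inputs `ũ_j = K x̃_j` and merged noise
covariance `Σ + B Σe Bᵀ` (same initial second moments), plus `τ · tr(Σe R)`. -/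
theorem excitation_cost_decomposition
    {Ω : Type*} [MeasurableSpace Ω] (μ : Measure Ω) [IsProbabilityMeasure μ]
    {n m : ℕ} (A : Matrix (Fin n) (Fin n) ℝ) (B : Matrix (Fin n) (Fin m) ℝ)
    (K : Matrix (Fin m) (Fin n) ℝ)
    (Q : Matrix (Fin n) (Fin n) ℝ) (R : Matrix (Fin m) (Fin m) ℝ)
    (hQ : Q.IsSymm) (hQpd : Q.PosDef) (hR : R.IsSymm) (hRpd : R.PosDef)
    (S : Matrix (Fin n) (Fin n) ℝ) (Se : Matrix (Fin m) (Fin m) ℝ)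
    (hS : S.PosSemidef) (hSe : Se.PosSemidef)
    (x xt : ℕ → Ω → Fin n → ℝ) (e : ℕ → Ω → Fin m → ℝ) (w wt : ℕ → Ω → Fin n → ℝ)
    (u : ℕ → Ω → Fin m → ℝ) (ut : ℕ → Ω → Fin m → ℝ)
    -- dynamics and inputs
    (hx : ∀ j ω, x (j + 1) ω = (A + B * K).mulVec (x j ω) + B.mulVec (e j ω) + w j ω)
    (hu : ∀ j ω, u j ω = K.mulVec (x j ω) + e j ω)
    (hxt : ∀ j ω, xt (j + 1) ω = (A + B * K).mulVec (xt j ω) + wt j ω)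
    (hut : ∀ j ω, ut j ω = K.mulVec (xt j ω))
    -- excitation noise: zero mean, covariance Σe, uncorrelated with the state
    (hemean : ∀ j i, ∫ ω, e j ω i ∂μ = 0)
    (hecov : ∀ j i l, ∫ ω, e j ω i * e j ω l ∂μ = Se i l)
    (hxe : ∀ j i l, ∫ ω, x j ω i * e j ω l ∂μ = 0)
    -- combined driving noise: zero mean, uncorrelated with state, merged covariance
    (hmean : ∀ j i, ∫ ω, (B.mulVec (e j ω) + w j ω) i ∂μ = 0)
    (hmeant : ∀ j i, ∫ ω, wt j ω i ∂μ = 0)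
    (hcross : ∀ j i l, ∫ ω, x j ω i * (B.mulVec (e j ω) + w j ω) l ∂μ = 0)
    (hcrosst : ∀ j i l, ∫ ω, xt j ω i * wt j ω l ∂μ = 0)
    (hnoise : ∀ j i l,
      ∫ ω, (B.mulVec (e j ω) + w j ω) i * (B.mulVec (e j ω) + w j ω) l ∂μ
        = (S + B * Se * Bᵀ) i l)
    (hnoiset : ∀ j i l, ∫ ω, wt j ω i * wt j ω l ∂μ = (S + B * Se * Bᵀ) i l)
    -- integrability of all relevant second moments
    (hint : ∀ j i l, Integrable (fun ω => x j ω i * x j ω l) μ)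
    (hintt : ∀ j i l, Integrable (fun ω => xt j ω i * xt j ω l) μ)
    (hinte : ∀ j i l, Integrable (fun ω => e j ω i * e j ω l) μ)
    (hintxe : ∀ j i l, Integrable (fun ω => x j ω i * e j ω l) μ)
    (hintc : ∀ j i l, Integrable (fun ω => x j ω i * (B.mulVec (e j ω) + w j ω) l) μ)
    (hintct : ∀ j i l, Integrable (fun ω => xt j ω i * wt j ω l) μ)
    (hintn : ∀ j i l,
      Integrable (fun ω => (B.mulVec (e j ω) + w j ω) i * (B.mulVec (e j ω) + w j ω) l) μ)
    (hintnt : ∀ j i l, Integrable (fun ω => wt j ω i * wt j ω l) μ)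
    -- same initial (second-moment) distribution at the start of the window
    (k τ : ℕ)
    (hinit : ∀ i l, ∫ ω, x k ω i * x k ω l ∂μ = ∫ ω, xt k ω i * xt k ω l ∂μ) :
    ∫ ω, ∑ j ∈ range τ,
        (dotProduct (x (k + j) ω) (Q.mulVec (x (k + j) ω))
          + dotProduct (u (k + j) ω) (R.mulVec (u (k + j) ω))) ∂μ
      = (∫ ω, ∑ j ∈ range τ,
          (dotProduct (xt (k + j) ω) (Q.mulVec (xt (k + j) ω))
            + dotProduct (ut (k + j) ω) (R.mulVec (ut (k + j) ω))) ∂μ)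
        + (τ : ℝ) * (Se * R).trace :=
  excitation_cost_decomposition_general μ A B K Q R S Se x xt e w wt u ut hx hu hxt hut hecov hxe
    hcross hcrosst hnoise hnoiset hint hintt hinte hintxe hintc hintct hintn hintnt k τ hinit
end

section
/- Let X be a nonnegative random variable (observed cost) and let κ⁻ < κ⁺ be random thresholds depending on a parameter θ with distribution p_θ. Suppose for every θ in a set Θ with P(Θ) ≥ ν we have P(X ∉ (κ⁻(θ), κ⁺(θ)) | θ) ≤ η. If (κ_ν⁻, κ_ν⁺) satisfies κ_ν⁻ ≤ κ⁻(θ) and κ_ν⁺ ≥ κ⁺(θ) for all θ ∈ Θ, then P(X ∉ (κ_ν⁻, κ_ν⁺)) ≤ 1 − ν(1 − η). -/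
open MeasureTheory

/- Neither `f` nor `Θ` need be measurable: the lower integral of `f` is attained by a measurable
minorant `g`, and the measurable set `{g ≤ c}` contains `Θ`. -/
lemma lintegral_le_add_mul_one_sub_of_forall_mem_le {T : Type*} [MeasurableSpace T]
    (p : Measure T) [IsProbabilityMeasure p] {f : T → ENNReal} {c d : ENNReal} {Θ : Set T}
    (hfΘ : ∀ θ ∈ Θ, f θ ≤ c) (hf : ∀ θ, f θ ≤ c + d) :
    ∫⁻ θ, f θ ∂p ≤ c + d * (1 - p Θ) := by
  obtain ⟨g, hg, hgf, hfg⟩ := exists_measurable_le_lintegral_eq p f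
  set S := {θ | g θ ≤ c}
  have hS : MeasurableSet S := measurableSet_le hg measurable_const
  have hΘS : Θ ⊆ S := fun θ hθ => (hgf θ).trans (hfΘ θ hθ)
  calc ∫⁻ θ, f θ ∂p = ∫⁻ θ in S, g θ ∂p + ∫⁻ θ in Sᶜ, g θ ∂p := by
        rw [hfg, lintegral_add_compl _ hS]
    _ ≤ ∫⁻ _ in S, c ∂p + ∫⁻ _ in Sᶜ, (c + d) ∂p :=
        add_le_add (setLIntegral_mono measurable_const fun _ hθ => hθ)
          (setLIntegral_mono measurable_const fun θ _ => (hgf θ).trans (hf θ))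
    _ = c + d * p Sᶜ := by
        rw [setLIntegral_const, setLIntegral_const, add_mul, ← add_assoc, ← mul_add,
          measure_add_measure_compl hS, measure_univ, mul_one]
    _ ≤ c + d * (1 - p Θ) := by
        rw [prob_compl_eq_one_sub hS]
        gcongr

theorem widened_trigger_bound_general
    {T : Type*} [MeasurableSpace T] (p : Measure T) [IsProbabilityMeasure p]
    (ν : T → Measure ℝ) (hνprob : ∀ θ, IsProbabilityMeasure (ν θ))
    (κlo κhi : T → ℝ)
    (Θ : Set T) (η ν₀ : ℝ)
    (hη : η ∈ Set.Icc (0 : ℝ) 1) (hν₀ : ν₀ ∈ Set.Icc (0 : ℝ) 1)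
    (hΘ : ENNReal.ofReal ν₀ ≤ p Θ)
    (hcond : ∀ θ ∈ Θ,
      ν θ {x : ℝ | x ∉ Set.Ioo (κlo θ) (κhi θ)} ≤ ENNReal.ofReal η)
    (κνlo κνhi : ℝ)
    (hlo : ∀ θ ∈ Θ, κνlo ≤ κlo θ) (hhi : ∀ θ ∈ Θ, κhi θ ≤ κνhi) :
    ∫⁻ θ, ν θ {x : ℝ | x ∉ Set.Ioo κνlo κνhi} ∂p
      ≤ ENNReal.ofReal (1 - ν₀ * (1 - η)) := by
  obtain ⟨hη0, hη1⟩ := hη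
  obtain ⟨hν₀0, hν₀1⟩ := hν₀
  have hmiss_on : ∀ θ ∈ Θ, ν θ {x | x ∉ Set.Ioo κνlo κνhi} ≤ ENNReal.ofReal η := fun θ hθ =>
    (measure_mono (Set.compl_subset_compl.mpr
      (Set.Ioo_subset_Ioo (hlo θ hθ) (hhi θ hθ)))).trans (hcond θ hθ)
  have hη_split : ENNReal.ofReal η + ENNReal.ofReal (1 - η) = 1 := by
    rw [← ENNReal.ofReal_add hη0 (by linarith), add_sub_cancel, ENNReal.ofReal_one]
  have hmiss : ∀ θ, ν θ {x | x ∉ Set.Ioo κνlo κνhi}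
      ≤ ENNReal.ofReal η + ENNReal.ofReal (1 - η) := fun θ => by
    have := hνprob θ
    exact hη_split ▸ prob_le_one
  have hΘc : 1 - p Θ ≤ ENNReal.ofReal (1 - ν₀) := by
    rw [ENNReal.ofReal_sub _ hν₀0, ENNReal.ofReal_one]
    exact tsub_le_tsub_left hΘ 1
  calc _ ≤ ENNReal.ofReal η + ENNReal.ofReal (1 - η) * (1 - p Θ) :=
        lintegral_le_add_mul_one_sub_of_forall_mem_le p hmiss_on hmiss
    _ ≤ ENNReal.ofReal η + ENNReal.ofReal (1 - η) * ENNReal.ofReal (1 - ν₀) := by gcongr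
    _ = ENNReal.ofReal (1 - ν₀ * (1 - η)) := by
        rw [← ENNReal.ofReal_mul (by linarith),
          ← ENNReal.ofReal_add hη0 (mul_nonneg (by linarith) (by linarith))]
        ring_nf

/-- Two-stage model of the uncertainty-aware trigger: the parameter
`θ` has law `p`, and conditionally on `θ` the observed cost has law `ν θ`. If on a
parameter set `Θ` of probability at least `ν₀` the per-parameter confidence intervals
`(κ⁻(θ), κ⁺(θ))` miss the cost with conditional probability at most `η`, and
`(κν⁻, κν⁺)` contains all those intervals, then the overall probability that the cost
leaves `(κν⁻, κν⁺)` is at most `1 − ν₀(1 − η)`. -/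
theorem widened_trigger_bound
    {T : Type*} [MeasurableSpace T] (p : Measure T) [IsProbabilityMeasure p]
    (ν : T → Measure ℝ) (hνprob : ∀ θ, IsProbabilityMeasure (ν θ))
    (hX : ∀ θ, ν θ {x : ℝ | x < 0} = 0)  -- the observed cost is nonnegative
    (κlo κhi : T → ℝ) (hκ : ∀ θ, κlo θ < κhi θ)
    (Θ : Set T) (η ν₀ : ℝ)
    (hη : η ∈ Set.Icc (0 : ℝ) 1) (hν₀ : ν₀ ∈ Set.Icc (0 : ℝ) 1)
    (hΘ : ENNReal.ofReal ν₀ ≤ p Θ)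
    (hcond : ∀ θ ∈ Θ,
      ν θ {x : ℝ | x ∉ Set.Ioo (κlo θ) (κhi θ)} ≤ ENNReal.ofReal η)
    (κνlo κνhi : ℝ)
    (hlo : ∀ θ ∈ Θ, κνlo ≤ κlo θ) (hhi : ∀ θ ∈ Θ, κhi θ ≤ κνhi) :
    ∫⁻ θ, ν θ {x : ℝ | x ∉ Set.Ioo κνlo κνhi} ∂p
      ≤ ENNReal.ofReal (1 - ν₀ * (1 - η)) :=
  widened_trigger_bound_general p ν hνprob κlo κhi Θ η ν₀ hη hν₀ hΘ hcond κνlo κνhi hlo hhi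
end
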